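/- Let M be a d×d real matrix and let n ∈ ℝ^d be a unit vector. Then the vector-valued function t ↦ ((I + tMᵀ)⁻¹ n) / ‖(I + tMᵀ)⁻¹ n‖ (defined for all t small enough that I + tMᵀ is invertible) has derivative at t = 0 equal to −(Mᵀ n − ⟨Mᵀ n, n⟩ n), i.e. minus the component of Mᵀ n orthogonal to n. (With M = Dh(x) the Jacobian of a C¹ deformation field h at a boundary point x with outer unit normal n, this function is the transported unit normal of the deformed boundary under T_t = Id + t h, so this computes the material derivative ṅ of the normal vector, which the paper writes as ṅ = −∇_τ(h·n) + Dn h_τ.) -/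

import Mathlib

open scoped RealInnerProductSpace
open Matrix

/-!
The curve `t ↦ (I + tMᵀ)⁻¹ n` starts at `n` with velocity `-Mᵀ n`, because inversion has
derivative `X ↦ -X` at the identity. Normalizing a curve through a unit vector `x` removes the
`x`-component of its velocity, which leaves the tangential part of `-Mᵀ n`.
-/

section NormalizedCurve

variable {E : Type*} [NormedAddCommGroup E] [InnerProductSpace ℝ E] {f : ℝ → E} {f' : E} {t : ℝ}

theorem HasDerivAt.norm_of_ne_zero (hf : HasDerivAt f f' t) (h0 : f t ≠ 0) :
    HasDerivAt (fun s => ‖f s‖) (⟪f t, f'⟫ / ‖f t‖) t := by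
  have hpos : 0 < ‖f t‖ := norm_pos_iff.2 h0
  have := hf.norm_sq.sqrt (by positivity)
  simp only [Real.sqrt_sq (norm_nonneg _)] at this
  convert this using 1
  field_simp

theorem HasDerivAt.inv_norm_smul (hf : HasDerivAt f f' t) (h0 : f t ≠ 0) :
    HasDerivAt (fun s => ‖f s‖⁻¹ • f s) (‖f t‖⁻¹ • (f' - (⟪f t, f'⟫ / ‖f t‖ ^ 2) • f t)) t := by
  refine (((hf.norm_of_ne_zero h0).inv (norm_ne_zero_iff.2 h0)).smul hf).congr_deriv ?_
  simp only [Pi.inv_apply]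
  module

end NormalizedCurve

theorem hasDerivAt_ringInverse_one_add_smul {R : Type*} [NormedRing R] [HasSummableGeomSeries R]
    [NormedAlgebra ℝ R] (a : R) :
    HasDerivAt (fun t : ℝ => Ring.inverse (1 + t • a)) (-a) 0 := by
  have hcurve : HasDerivAt (fun t : ℝ => 1 + t • a) a 0 := by
    simpa using ((hasDerivAt_id (0 : ℝ)).smul_const a).const_add 1
  have := (hasFDerivAt_ringInverse (𝕜 := ℝ) (1 : Rˣ)).comp_hasDerivAt_of_eq 0 hcurve (by simp)
  exact this.congr_deriv (by simp)

theorem Matrix.hasDerivAt_toEuclideanLin_inv_one_add_smul {ι : Type*} [Fintype ι] [DecidableEq ι]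
    (A : Matrix ι ι ℝ) (v : EuclideanSpace ℝ ι) :
    HasDerivAt (fun t : ℝ => toEuclideanLin (1 + t • A)⁻¹ v) (-toEuclideanLin A v) 0 := by
  -- Any normed-algebra structure on matrices will do: the statement lives in `ℝ^ι`.
  let := Matrix.frobeniusNormedRing (m := ι) (α := ℝ)
  let := Matrix.frobeniusNormedAlgebra (m := ι) (α := ℝ) (R := ℝ)
  let evalAt : Matrix ι ι ℝ →L[ℝ] EuclideanSpace ℝ ι :=
    LinearMap.toContinuousLinearMap ((LinearMap.applyₗ v).comp toEuclideanLin.toLinearMap)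
  simp only [nonsing_inv_eq_ringInverse]
  exact (evalAt.hasFDerivAt.comp_hasDerivAt 0 (hasDerivAt_ringInverse_one_add_smul A)).congr_deriv
    (evalAt.map_neg A)

/-- The transported unit normal `t ↦ ((I + tMᵀ)⁻¹ n) / ‖(I + tMᵀ)⁻¹ n‖` has derivative
at `t = 0` equal to `−(Mᵀ n − ⟨Mᵀ n, n⟩ n)`, minus the component of `Mᵀ n` orthogonal
to `n`. -/
theorem statement6 {d : ℕ} (M : Matrix (Fin d) (Fin d) ℝ)
    (n : EuclideanSpace ℝ (Fin d)) (hn : ‖n‖ = 1) :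
    HasDerivAt
      (fun t : ℝ =>
        ‖Matrix.toEuclideanLin (((1 : Matrix (Fin d) (Fin d) ℝ) + t • Mᵀ)⁻¹) n‖⁻¹ •
          Matrix.toEuclideanLin (((1 : Matrix (Fin d) (Fin d) ℝ) + t • Mᵀ)⁻¹) n)
      (-(Matrix.toEuclideanLin Mᵀ n - ⟪Matrix.toEuclideanLin Mᵀ n, n⟫ • n)) 0 := by
  have hcurve := hasDerivAt_toEuclideanLin_inv_one_add_smul Mᵀ n
  have hstart : toEuclideanLin ((1 : Matrix (Fin d) (Fin d) ℝ) + (0 : ℝ) • Mᵀ)⁻¹ n = n := by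
    simp
  have hn0 : toEuclideanLin ((1 : Matrix (Fin d) (Fin d) ℝ) + (0 : ℝ) • Mᵀ)⁻¹ n ≠ 0 := by
    rw [hstart, ← norm_ne_zero_iff, hn]
    exact one_ne_zero
  refine (hcurve.inv_norm_smul hn0).congr_deriv ?_
  rw [hstart, hn, inner_neg_right, real_inner_comm]
  module
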